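/- Let a : ℕ → ℂ be supported on primes p ≤ √x and define a_{m,√x}(n) = ∑_{p₁⋯p_m = n, each p_i ≤ √x prime} a(p₁)⋯a(p_m). Then ∑_{n ≤ x^{m/2}} |a_{m,√x}(n)|²/n² ≤ m! · (∑_{p ≤ √x} |a(p)|²/p²)^m. -/

import Mathlib

/-!
Two tuples of primes with the same product are permutations of each other, so each fibre
`{f ∈ sᵐ | ∏ f i = n}` has at most `m!` elements. Cauchy–Schwarz on a fibre then gives
`|a_m(n)|² ≤ m! ∑_{f ↦ n} ∏ |a(f i)|²`, and dividing by `n² = ∏ (f i)²` and summing over `n`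
reassembles the sum over all tuples into `(∑_p |a(p)|²/p²)^m`.
-/

open Finset

lemma exists_perm_eq_comp_of_perm_ofFn {α : Type*} [LinearOrder α] {m : ℕ} {f g : Fin m → α}
    (h : (List.ofFn g).Perm (List.ofFn f)) : ∃ σ : Equiv.Perm (Fin m), g = f ∘ σ := by
  have hsorted : g ∘ Tuple.sort g = f ∘ Tuple.sort f := by
    rw [← List.ofFn_inj]
    refine List.Perm.eq_of_sortedLE (Tuple.monotone_sort g).sortedLE_ofFn
      (Tuple.monotone_sort f).sortedLE_ofFn ?_
    exact ((Equiv.Perm.ofFn_comp_perm _ g).trans h).trans (Equiv.Perm.ofFn_comp_perm _ f).symm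
  refine ⟨(Tuple.sort g)⁻¹.trans (Tuple.sort f), funext fun i => ?_⟩
  calc g i = (g ∘ Tuple.sort g) ((Tuple.sort g)⁻¹ i) := by simp
    _ = (f ∘ Tuple.sort f) ((Tuple.sort g)⁻¹ i) := by rw [hsorted]

lemma card_le_factorial_of_forall_perm_ofFn {α : Type*} [LinearOrder α] {m : ℕ}
    (F : Finset (Fin m → α)) (l : List α) (hF : ∀ f ∈ F, (List.ofFn f).Perm l) :
    #F ≤ m.factorial := by
  rcases F.eq_empty_or_nonempty with rfl | ⟨f₀, hf₀⟩
  · simp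
  have hsub : F ⊆ univ.image fun σ : Equiv.Perm (Fin m) => f₀ ∘ σ := by
    intro g hg
    obtain ⟨σ, rfl⟩ := exists_perm_eq_comp_of_perm_ofFn ((hF g hg).trans (hF f₀ hf₀).symm)
    exact mem_image_of_mem _ (mem_univ σ)
  calc #F ≤ #(univ.image fun σ : Equiv.Perm (Fin m) => f₀ ∘ σ) := card_le_card hsub
    _ ≤ #(univ : Finset (Equiv.Perm (Fin m))) := card_image_le
    _ = m.factorial := by simp [Fintype.card_perm]

lemma perm_primeFactorsList_prod {m : ℕ} {f : Fin m → ℕ} (hf : ∀ i, (f i).Prime) :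
    (List.ofFn f).Perm (∏ i, f i).primeFactorsList :=
  Nat.primeFactorsList_unique (by rw [List.prod_ofFn]) fun p hp => by
    obtain ⟨i, rfl⟩ := List.mem_ofFn.mp hp
    exact hf i

lemma card_filter_prod_eq_le_factorial (m n : ℕ) {s : Finset ℕ} (hs : ∀ p ∈ s, p.Prime) :
    #({f ∈ Fintype.piFinset fun _ : Fin m => s | ∏ i, f i = n}) ≤ m.factorial := by
  refine card_le_factorial_of_forall_perm_ofFn _ n.primeFactorsList fun f hf => ?_
  obtain ⟨hfs, rfl⟩ := mem_filter.mp hf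
  exact perm_primeFactorsList_prod fun i => hs _ (Fintype.mem_piFinset.mp hfs i)

lemma sq_norm_sum_le_card_mul_sum_sq_norm {ι E : Type*} [SeminormedAddCommGroup E]
    (s : Finset ι) (f : ι → E) : ‖∑ i ∈ s, f i‖ ^ 2 ≤ #s * ∑ i ∈ s, ‖f i‖ ^ 2 :=
  (pow_le_pow_left₀ (norm_nonneg _) (norm_sum_le _ _) 2).trans sq_sum_le_card_mul_sum_sq

section

variable {R : Type*} [SeminormedCommRing R] [NormMulClass R] [NormOneClass R]

lemma sq_norm_sum_prod_fiber_div_sq_le (m n : ℕ) {s : Finset ℕ} (hs : ∀ p ∈ s, p.Prime)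
    (a : ℕ → R) :
    ‖∑ f ∈ Fintype.piFinset (fun _ : Fin m => s) with ∏ i, f i = n, ∏ i, a (f i)‖ ^ 2 /
        (n : ℝ) ^ 2 ≤
      m.factorial * ∑ f ∈ Fintype.piFinset (fun _ : Fin m => s) with ∏ i, f i = n,
        ∏ i, ‖a (f i)‖ ^ 2 / (f i : ℝ) ^ 2 := by
  set F := {f ∈ Fintype.piFinset fun _ : Fin m => s | ∏ i, f i = n}
  have hcard : (#F : ℝ) ≤ m.factorial := by exact_mod_cast card_filter_prod_eq_le_factorial m n hs
  have hterm : ∀ f ∈ F, ‖∏ i, a (f i)‖ ^ 2 / (n : ℝ) ^ 2 = ∏ i, ‖a (f i)‖ ^ 2 / (f i : ℝ) ^ 2 := by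
    intro f hf
    rw [← (mem_filter.mp hf).2, norm_prod, Nat.cast_prod, prod_div_distrib, prod_pow, prod_pow]
  calc ‖∑ f ∈ F, ∏ i, a (f i)‖ ^ 2 / (n : ℝ) ^ 2
      ≤ #F * (∑ f ∈ F, ‖∏ i, a (f i)‖ ^ 2) / (n : ℝ) ^ 2 := by
        gcongr; exact sq_norm_sum_le_card_mul_sum_sq_norm _ _
    _ ≤ m.factorial * ∑ f ∈ F, ‖∏ i, a (f i)‖ ^ 2 / (n : ℝ) ^ 2 := by
        rw [mul_div_assoc, sum_div]
        gcongr
    _ = m.factorial * ∑ f ∈ F, ∏ i, ‖a (f i)‖ ^ 2 / (f i : ℝ) ^ 2 := by rw [sum_congr rfl hterm]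

theorem sum_sq_norm_sum_prod_fiber_div_sq_le (m : ℕ) (T : Finset ℕ) {s : Finset ℕ}
    (hs : ∀ p ∈ s, p.Prime) (a : ℕ → R) :
    ∑ n ∈ T, ‖∑ f ∈ Fintype.piFinset (fun _ : Fin m => s) with ∏ i, f i = n,
        ∏ i, a (f i)‖ ^ 2 / (n : ℝ) ^ 2 ≤
      m.factorial * (∑ p ∈ s, ‖a p‖ ^ 2 / (p : ℝ) ^ 2) ^ m := by
  set w : ℕ → ℝ := fun p => ‖a p‖ ^ 2 / (p : ℝ) ^ 2
  calc _ ≤ ∑ n ∈ T, m.factorial * ∑ f ∈ Fintype.piFinset (fun _ : Fin m => s) with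
          ∏ i, f i = n, ∏ i, w (f i) :=
        sum_le_sum fun n _ => sq_norm_sum_prod_fiber_div_sq_le m n hs a
    _ ≤ m.factorial * ∑ f ∈ Fintype.piFinset (fun _ : Fin m => s), ∏ i, w (f i) := by
        rw [← mul_sum]
        gcongr
        exact sum_fiberwise_le_sum_of_sum_fiber_nonneg fun _ _ =>
          sum_nonneg fun _ _ => prod_nonneg fun _ _ => by positivity
    _ = m.factorial * (∑ p ∈ s, w p) ^ m := by
        rw [← prod_univ_sum, prod_const, card_univ, Fintype.card_fin]

end

theorem stmt_17_general (x : ℝ) (m : ℕ) (a : ℕ → ℂ) :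
    ∑ n ∈ Finset.Icc 1 (Nat.floor (Real.sqrt x ^ m)),
        ‖∑ f ∈ (Fintype.piFinset fun _ : Fin m =>
              (Finset.range (Nat.floor (Real.sqrt x) + 1)).filter Nat.Prime).filter
              (fun f => ∏ i, f i = n),
            ∏ i, a (f i)‖ ^ 2 / (n : ℝ) ^ 2
      ≤ (m.factorial : ℝ) *
          (∑ p ∈ (Finset.range (Nat.floor (Real.sqrt x) + 1)).filter Nat.Prime,
            ‖a p‖ ^ 2 / (p : ℝ) ^ 2) ^ m :=
  sum_sq_norm_sum_prod_fiber_div_sq_le m _ (fun _ hp => (mem_filter.mp hp).2) a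

theorem stmt_17 (x : ℝ) (hx : 4 ≤ x) (m : ℕ) (a : ℕ → ℂ)
    (ha : ∀ p : ℕ, a p ≠ 0 → p.Prime ∧ (p : ℝ) ≤ Real.sqrt x) :
    ∑ n ∈ Finset.Icc 1 (Nat.floor (Real.sqrt x ^ m)),
        ‖∑ f ∈ (Fintype.piFinset fun _ : Fin m =>
              (Finset.range (Nat.floor (Real.sqrt x) + 1)).filter Nat.Prime).filter
              (fun f => ∏ i, f i = n),
            ∏ i, a (f i)‖ ^ 2 / (n : ℝ) ^ 2
      ≤ (m.factorial : ℝ) *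
          (∑ p ∈ (Finset.range (Nat.floor (Real.sqrt x) + 1)).filter Nat.Prime,
            ‖a p‖ ^ 2 / (p : ℝ) ^ 2) ^ m :=
  stmt_17_general x m a
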